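/- Define H₂(ε) = −(1/4 + 3ε/2)·log₂(1/4 + 3ε/2) − 3(1/4 − ε/2)·log₂(1/4 − ε/2) and H₃(ε) = −2ε·log₂(2ε) − 2(1/2 − ε)·log₂(1/2 − ε). Then the second derivative of H₃ − H₂ equals −2/(ε(1−2ε)(1+6ε)·ln 2), which is strictly negative for all 0 < ε < 1/2; hence the function ε ↦ H₃(ε) − H₂(ε) is strictly concave on the interval (0, 1/2), so it has at most two zeros in [0, 1/2]. -/

import Mathlib

noncomputable section

/-- The entropy of the distribution `(1/4+3ε/2, 1/4−ε/2, 1/4−ε/2, 1/4−ε/2)`. -/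
def H2 (ε : ℝ) : ℝ :=
  -((1/4 + 3*ε/2) * Real.logb 2 (1/4 + 3*ε/2))
    - 3 * ((1/4 - ε/2) * Real.logb 2 (1/4 - ε/2))

/-- The entropy of the distribution `(2ε, 1/2−ε, 1/2−ε, 0)`. -/
def H3 (ε : ℝ) : ℝ :=
  -(2*ε * Real.logb 2 (2*ε)) - 2 * ((1/2 - ε) * Real.logb 2 (1/2 - ε))

lemma f_eq : (fun t : ℝ => H3 t - H2 t) = fun t =>
    (-(2*t * Real.log (2*t)) - 2*((1/2 - t) * Real.log (1/2 - t))
      + (1/4 + 3*t/2) * Real.log (1/4 + 3*t/2)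
      + 3*((1/4 - t/2) * Real.log (1/4 - t/2))) / Real.log 2 := by
  funext t
  simp only [H2, H3, Real.logb]
  ring

lemma f_cont : Continuous (fun t : ℝ => H3 t - H2 t) := by
  rw [f_eq]
  have h := Real.continuous_mul_log
  have c1 : Continuous fun t : ℝ => (2*t) * Real.log (2*t) :=
    h.comp (continuous_const.mul continuous_id)
  have c2 : Continuous fun t : ℝ => (1/2 - t) * Real.log (1/2 - t) :=
    h.comp (continuous_const.sub continuous_id)
  have c3 : Continuous fun t : ℝ => (1/4 + 3*t/2) * Real.log (1/4 + 3*t/2) :=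
    h.comp (by continuity)
  have c4 : Continuous fun t : ℝ => (1/4 - t/2) * Real.log (1/4 - t/2) :=
    h.comp (by continuity)
  exact (((c1.neg.sub (continuous_const.mul c2)).add c3).add
    (continuous_const.mul c4)).div_const _

/-- The first derivative function. -/
def G (t : ℝ) : ℝ :=
  (-2 * Real.log (2*t) + 2 * Real.log (1/2 - t) + 3/2 * Real.log (1/4 + 3*t/2)
    - 3/2 * Real.log (1/4 - t/2)) / Real.log 2

lemma hasDerivAt_f {ε : ℝ} (h1 : (0:ℝ) < ε) (h2 : ε < 1/2) :
    HasDerivAt (fun t => H3 t - H2 t) (G ε) ε := by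
  have ha1 : (2*ε) ≠ 0 := by positivity
  have ha2 : (1/2 - ε) ≠ 0 := by nlinarith
  have ha3 : (1/4 + 3*ε/2) ≠ 0 := by positivity
  have ha4 : (1/4 - ε/2) ≠ 0 := by nlinarith
  have d1 : HasDerivAt (fun t : ℝ => 2*t * Real.log (2*t))
      ((Real.log (2*ε) + 1) * 2) ε :=
    (Real.hasDerivAt_mul_log ha1).comp ε (by simpa using (hasDerivAt_id ε).const_mul 2)
  have d2 : HasDerivAt (fun t : ℝ => (1/2 - t) * Real.log (1/2 - t))
      ((Real.log (1/2 - ε) + 1) * (-1)) ε :=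
    (Real.hasDerivAt_mul_log ha2).comp ε
      (by simpa using (hasDerivAt_id ε).const_sub (1/2 : ℝ))
  have d3 : HasDerivAt (fun t : ℝ => (1/4 + 3*t/2) * Real.log (1/4 + 3*t/2))
      ((Real.log (1/4 + 3*ε/2) + 1) * (3/2)) ε := by
    refine (Real.hasDerivAt_mul_log ha3).comp (h := fun t : ℝ => 1/4 + 3*t/2) ε ?_
    have : HasDerivAt (fun t : ℝ => 1/4 + 3*t/2) (3/2) ε := by
      have := ((hasDerivAt_id ε).const_mul (3:ℝ)).div_const 2
      simpa using this.const_add (1/4 : ℝ)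
    exact this
  have d4 : HasDerivAt (fun t : ℝ => (1/4 - t/2) * Real.log (1/4 - t/2))
      ((Real.log (1/4 - ε/2) + 1) * (-(1/2))) ε := by
    refine (Real.hasDerivAt_mul_log ha4).comp (h := fun t : ℝ => 1/4 - t/2) ε ?_
    have : HasDerivAt (fun t : ℝ => 1/4 - t/2) (-(1/2)) ε := by
      have := ((hasDerivAt_id ε).div_const (2:ℝ)).const_sub (1/4 : ℝ)
      simpa using this
    exact this
  have hP := (((d1.neg.sub (d2.const_mul 2)).add d3).add (d4.const_mul 3)).div_const
    (Real.log 2)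
  rw [f_eq]
  refine hP.congr_deriv ?_
  unfold G
  ring

/-- The second derivative value before simplification. -/
lemma hasDerivAt_G {ε : ℝ} (h1 : (0:ℝ) < ε) (h2 : ε < 1/2) :
    HasDerivAt G
      ((-2 * ((2*ε)⁻¹ * 2) + 2 * ((1/2 - ε)⁻¹ * (-1))
        + 3/2 * ((1/4 + 3*ε/2)⁻¹ * (3/2)) - 3/2 * ((1/4 - ε/2)⁻¹ * (-(1/2))))
        / Real.log 2) ε := by
  have ha1 : (2*ε) ≠ 0 := by positivity
  have ha2 : (1/2 - ε) ≠ 0 := by nlinarith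
  have ha3 : (1/4 + 3*ε/2) ≠ 0 := by positivity
  have ha4 : (1/4 - ε/2) ≠ 0 := by nlinarith
  have d1 : HasDerivAt (fun t : ℝ => Real.log (2*t)) ((2*ε)⁻¹ * 2) ε :=
    (Real.hasDerivAt_log ha1).comp ε (by simpa using (hasDerivAt_id ε).const_mul 2)
  have d2 : HasDerivAt (fun t : ℝ => Real.log (1/2 - t)) ((1/2 - ε)⁻¹ * (-1)) ε :=
    (Real.hasDerivAt_log ha2).comp ε
      (by simpa using (hasDerivAt_id ε).const_sub (1/2 : ℝ))
  have d3 : HasDerivAt (fun t : ℝ => Real.log (1/4 + 3*t/2)) ((1/4 + 3*ε/2)⁻¹ * (3/2)) ε := by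
    refine (Real.hasDerivAt_log ha3).comp (h := fun t : ℝ => 1/4 + 3*t/2) ε ?_
    have := ((hasDerivAt_id ε).const_mul (3:ℝ)).div_const 2
    simpa using this.const_add (1/4 : ℝ)
  have d4 : HasDerivAt (fun t : ℝ => Real.log (1/4 - t/2)) ((1/4 - ε/2)⁻¹ * (-(1/2))) ε := by
    refine (Real.hasDerivAt_log ha4).comp (h := fun t : ℝ => 1/4 - t/2) ε ?_
    have := ((hasDerivAt_id ε).div_const (2:ℝ)).const_sub (1/4 : ℝ)
    simpa using this
  exact (((((d1.const_mul (-2)).add (d2.const_mul 2)).add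
    (d3.const_mul (3/2))).sub (d4.const_mul (3/2))).div_const (Real.log 2))

lemma deriv2_f {ε : ℝ} (h1 : (0:ℝ) < ε) (h2 : ε < 1/2) :
    deriv (deriv (fun t => H3 t - H2 t)) ε
      = -2 / (ε * (1 - 2*ε) * (1 + 6*ε) * Real.log 2) := by
  have hev : deriv (fun t => H3 t - H2 t) =ᶠ[nhds ε] G := by
    filter_upwards [Ioo_mem_nhds h1 h2] with x hx
    exact (hasDerivAt_f hx.1 hx.2).deriv
  rw [hev.deriv_eq, (hasDerivAt_G h1 h2).deriv]
  have ha1 : (ε:ℝ) ≠ 0 := ne_of_gt h1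
  have ha2 : (1/2 - ε) ≠ 0 := by nlinarith
  have ha3 : (1/4 + 3*ε/2) ≠ 0 := by positivity
  have ha4 : (1/4 - ε/2) ≠ 0 := by nlinarith
  have hb2 : (1 - 2*ε) ≠ 0 := by nlinarith
  have hb3 : (1 + 6*ε) ≠ 0 := by nlinarith
  have hl : Real.log 2 ≠ 0 := ne_of_gt (Real.log_pos one_lt_two)
  rw [show (1/2 - ε : ℝ) = (1-2*ε)/2 by ring, show (1/4+3*ε/2 : ℝ) = (1+6*ε)/4 by ring,
    show (1/4 - ε/2 : ℝ) = (1-2*ε)/4 by ring]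
  field_simp
  ring

lemma strictConcave_Icc :
    StrictConcaveOn ℝ (Set.Icc (0:ℝ) (1/2)) (fun t => H3 t - H2 t) := by
  apply strictConcaveOn_of_deriv2_neg (convex_Icc _ _) f_cont.continuousOn
  intro x hx
  rw [interior_Icc] at hx
  have h := deriv2_f hx.1 hx.2
  show deriv (deriv (fun t => H3 t - H2 t)) x < 0
  rw [h]
  apply div_neg_of_neg_of_pos (by norm_num)
  have h2 : (0:ℝ) < 1 - 2*x := by nlinarith [hx.2]
  have h3 : (0:ℝ) < 1 + 6*x := by nlinarith [hx.1]
  have h4 := Real.log_pos (by norm_num : (1:ℝ) < 2)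
  exact mul_pos (mul_pos (mul_pos hx.1 h2) h3) h4

lemma no_three_zeros {x y z : ℝ} (hx : x ∈ Set.Icc (0:ℝ) (1/2))
    (hz : z ∈ Set.Icc (0:ℝ) (1/2)) (hxy : x < y) (hyz : y < z)
    (fx : H3 x - H2 x = 0) (fy : H3 y - H2 y = 0) (fz : H3 z - H2 z = 0) : False := by
  have hxz : x < z := hxy.trans hyz
  set a : ℝ := (z - y) / (z - x) with ha
  set b : ℝ := (y - x) / (z - x) with hb
  have hzx : (0:ℝ) < z - x := by linarith
  have hapos : 0 < a := div_pos (by linarith) hzx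
  have hbpos : 0 < b := div_pos (by linarith) hzx
  have hab : a + b = 1 := by
    rw [ha, hb, ← add_div, div_eq_one_iff_eq hzx.ne']
    ring
  have hy : a * x + b * z = y := by
    rw [ha, hb]
    field_simp
    ring
  have hcc := strictConcave_Icc.2 hx hz (ne_of_lt hxz) hapos hbpos hab
  simp only [smul_eq_mul] at hcc
  rw [hy, fx, fz, fy] at hcc
  simp at hcc

/-- The second derivative of `H₃ − H₂` equals `−2/(ε(1−2ε)(1+6ε)·ln 2)`, which is strictly
negative on `(0, 1/2)`; hence `H₃ − H₂` is strictly concave on `(0, 1/2)` and has at most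
two zeros in `[0, 1/2]`. -/
theorem H3_sub_H2_strictly_concave :
    (∀ ε : ℝ, 0 < ε → ε < 1/2 →
      deriv (deriv (fun t => H3 t - H2 t)) ε
          = -2 / (ε * (1 - 2*ε) * (1 + 6*ε) * Real.log 2)
        ∧ -2 / (ε * (1 - 2*ε) * (1 + 6*ε) * Real.log 2) < 0)
    ∧ StrictConcaveOn ℝ (Set.Ioo 0 (1/2)) (fun t => H3 t - H2 t)
    ∧ (∀ a b c : ℝ, a ∈ Set.Icc (0:ℝ) (1/2) → b ∈ Set.Icc (0:ℝ) (1/2)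
        → c ∈ Set.Icc (0:ℝ) (1/2)
        → H3 a - H2 a = 0 → H3 b - H2 b = 0 → H3 c - H2 c = 0
        → a = b ∨ a = c ∨ b = c) := by
  refine ⟨?_, ?_, ?_⟩
  · intro ε h1 h2
    refine ⟨deriv2_f h1 h2, ?_⟩
    apply div_neg_of_neg_of_pos (by norm_num)
    have h3 : (0:ℝ) < 1 - 2*ε := by nlinarith
    have h4 : (0:ℝ) < 1 + 6*ε := by nlinarith
    have h5 := Real.log_pos (by norm_num : (1:ℝ) < 2)
    exact mul_pos (mul_pos (mul_pos h1 h3) h4) h5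
  · exact strictConcave_Icc.subset Set.Ioo_subset_Icc_self (convex_Ioo _ _)
  · intro a b c ha hb hc fa fb fc
    by_contra h
    push_neg at h
    obtain ⟨hab, hac, hbc⟩ := h
    rcases lt_trichotomy a b with h1 | h1 | h1
    · rcases lt_trichotomy b c with h2 | h2 | h2
      · exact no_three_zeros ha hc h1 h2 fa fb fc
      · exact hbc h2
      · rcases lt_trichotomy a c with h3 | h3 | h3
        · exact no_three_zeros ha hb h3 h2 fa fc fb
        · exact hac h3
        · exact no_three_zeros hc hb h3 h1 fc fa fb
    · exact hab h1
    · rcases lt_trichotomy a c with h2 | h2 | h2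
      · exact no_three_zeros hb hc h1 h2 fb fa fc
      · exact hac h2
      · rcases lt_trichotomy b c with h3 | h3 | h3
        · exact no_three_zeros hb ha h3 h2 fb fc fa
        · exact hbc h3
        · exact no_three_zeros hc ha h3 h1 fc fb fa
    

end
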